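/- For every β > 0, the function W_β : GL⁺(2) → ℝ defined by W_β(F) = ( (1/2)·(log(K(F) + √(K(F)² − 1)))² )^{β/2}, where K(F) = ‖F‖²/(2·det F) with the Frobenius norm, is neither rank-one convex nor polyconvex on GL⁺(2). -/

import Mathlib

/-!
On the rank-one line `c ↦ diag(c, 1)` the energy is `W_β = 2^{-β/2} (log c)^β`, whose
second derivative has the sign of `β - 1 - log c`; so `W_β` is strictly concave there for
`c ≥ e^β`, and convexity fails at the midpoint of any segment in that range. Polyconvexity
implies rank-one convexity, since the determinant is affine along rank-one lines.
-/

open Matrix Set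

noncomputable section

/-- The space of real 2×2 matrices. -/
abbrev Mat2 : Type := Matrix (Fin 2) (Fin 2) ℝ

/-- The special orthogonal group SO(2): orthogonal 2×2 matrices with determinant 1. -/
def SO2 : Set Mat2 := {Q : Mat2 | Qᵀ * Q = 1 ∧ Q.det = 1}

/-- A function `W` (viewed on GL⁺(2) = {F | 0 < det F}) is polyconvex if there is a
convex function `P : ℝ^{2×2} × ℝ → ℝ ∪ {+∞}` with `W F = P (F, det F)` on GL⁺(2). -/
def Polyconvex (W : Mat2 → ℝ) : Prop :=
  ∃ P : Mat2 × ℝ → EReal,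
    (∀ x y : Mat2 × ℝ, ∀ a b : ℝ, 0 ≤ a → 0 ≤ b → a + b = 1 →
      P (a • x + b • y) ≤ (a : EReal) * P x + (b : EReal) * P y) ∧
    (∀ F : Mat2, 0 < F.det → (W F : EReal) = P (F, F.det))

/-- Rank-one convexity of `W` on GL⁺(2): convexity along rank-one line segments
lying in GL⁺(2). -/
def RankOneConvex (W : Mat2 → ℝ) : Prop :=
  ∀ F : Mat2, 0 < F.det → ∀ ξ η : Fin 2 → ℝ, ∀ θ : ℝ, θ ∈ Set.Icc (0:ℝ) 1 →
    (∀ t ∈ Set.Icc (0:ℝ) 1, 0 < (F + t • vecMulVec ξ η).det) →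
    W (F + (1 - θ) • vecMulVec ξ η) ≤ θ * W F + (1 - θ) * W (F + vecMulVec ξ η)

/-- Objectivity and isotropy: bi-SO(2)-invariance on GL⁺(2). -/
def ObjectiveIsotropic (W : Mat2 → ℝ) : Prop :=
  ∀ F : Mat2, 0 < F.det → ∀ Q₁ Q₂ : Mat2, Q₁ ∈ SO2 → Q₂ ∈ SO2 →
    W (Q₁ * F * Q₂) = W F

/-- Isochoric: invariance under positive scaling on GL⁺(2). -/
def Isochoric (W : Mat2 → ℝ) : Prop :=
  ∀ F : Mat2, 0 < F.det → ∀ a : ℝ, 0 < a → W (a • F) = W F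

/-- The 2×2 diagonal matrix diag(a, b). -/
def diag2 (a b : ℝ) : Mat2 := !![a, 0; 0, b]

/-- The squared Frobenius norm of a 2×2 matrix. -/
def frobSq (F : Mat2) : ℝ := ∑ i, ∑ j, (F i j) ^ 2

/-- The operator norm of `F` induced by the Euclidean norm on ℝ²:
the supremum of ‖F·x‖ over Euclidean-unit vectors x. -/
def opNorm2 (F : Mat2) : ℝ :=
  sSup {r : ℝ | ∃ x : Fin 2 → ℝ, (x 0) ^ 2 + (x 1) ^ 2 = 1 ∧
    r = Real.sqrt ((F.mulVec x 0) ^ 2 + (F.mulVec x 1) ^ 2)}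

/-- The planar distortion `K(F) = ‖F‖²/(2 det F)`. -/
def distortionK (F : Mat2) : ℝ := frobSq F / (2 * F.det)

open Real

lemma hasDerivAt_log_rpow (β : ℝ) {x : ℝ} (hx : 1 < x) :
    HasDerivAt (fun x => log x ^ β) (β * log x ^ (β - 1) / x) x := by
  convert (hasDerivAt_log (by positivity)).rpow_const (p := β) (Or.inl (log_pos hx).ne') using 1
  field_simp

lemma hasDerivAt_deriv_log_rpow (β : ℝ) {x : ℝ} (hx : 1 < x) :
    HasDerivAt (fun x => β * log x ^ (β - 1) / x)
      (β * log x ^ (β - 2) * (β - 1 - log x) / x ^ 2) x := by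
  have hlog : 0 < log x := log_pos hx
  have hpow : log x ^ (β - 1) = log x ^ (β - 2) * log x := by
    rw [← rpow_add_one hlog.ne']; ring_nf
  have h := (((hasDerivAt_log (by positivity)).rpow_const (p := β - 1)
    (Or.inl hlog.ne')).const_mul β).fun_div (hasDerivAt_id' x) (by positivity)
  refine h.congr_deriv ?_
  rw [show β - 1 - 1 = β - 2 by ring, hpow]
  field_simp

lemma strictConcaveOn_log_rpow {β : ℝ} (hβ : 0 < β) :
    StrictConcaveOn ℝ (Ici (exp β)) (fun x => log x ^ β) := by
  have one_lt : ∀ x ∈ Ici (exp β), 1 < x := fun x hx =>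
    (one_lt_exp_iff.2 hβ).trans_le hx
  refine strictConcaveOn_of_deriv2_neg (convex_Ici _) ?_ fun x hx => ?_
  · exact ContinuousOn.rpow_const
      (continuousOn_log.mono fun x hx => (zero_lt_one.trans (one_lt x hx)).ne')
      fun _ _ => Or.inr hβ.le
  rw [interior_Ici] at hx
  have hx1 : 1 < x := one_lt x (mem_Ici.2 hx.le)
  have hderiv : deriv (fun x => log x ^ β) =ᶠ[nhds x] fun x => β * log x ^ (β - 1) / x :=
    Filter.eventually_of_mem (Ioi_mem_nhds hx1) fun y hy => (hasDerivAt_log_rpow β hy).deriv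
  rw [Function.iterate_succ_apply, Function.iterate_one, hderiv.deriv_eq,
    (hasDerivAt_deriv_log_rpow β hx1).deriv]
  have hlog : β < log x := by simpa using log_lt_log (exp_pos β) hx
  have : 0 < β * log x ^ (β - 2) := mul_pos hβ (rpow_pos_of_pos (hβ.trans hlog) _)
  exact div_neg_of_neg_of_pos (mul_neg_of_pos_of_neg this (by linarith)) (by positivity)

lemma StrictConcaveOn.const_mul {s : Set ℝ} {f : ℝ → ℝ} {k : ℝ} (hk : 0 < k)
    (hf : StrictConcaveOn ℝ s f) : StrictConcaveOn ℝ s fun x => k * f x := by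
  refine ⟨hf.1, fun x hx y hy hxy a b ha hb hab => ?_⟩
  have := hf.2 hx hy hxy ha hb hab
  simp only [smul_eq_mul] at this ⊢
  nlinarith

lemma det_add_smul_vecMulVec (F : Mat2) (ξ η : Fin 2 → ℝ) (t : ℝ) :
    (F + t • vecMulVec ξ η).det = (1 - t) * F.det + t * (F + vecMulVec ξ η).det := by
  simp only [det_fin_two, Matrix.add_apply, Matrix.smul_apply, vecMulVec_apply, smul_eq_mul]
  ring

lemma Polyconvex.rankOneConvex {W : Mat2 → ℝ} (hW : Polyconvex W) : RankOneConvex W := by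
  obtain ⟨P, hP, hWP⟩ := hW
  intro F hF ξ η θ hθ hdet
  set G := F + vecMulVec ξ η
  have hG : 0 < G.det := by simpa using hdet 1 (right_mem_Icc.2 zero_le_one)
  have hM : 0 < (F + (1 - θ) • vecMulVec ξ η).det :=
    hdet _ ⟨by linarith [hθ.2], by linarith [hθ.1]⟩
  have hpair : (F + (1 - θ) • vecMulVec ξ η, (F + (1 - θ) • vecMulVec ξ η).det)
      = θ • (F, F.det) + (1 - θ) • (G, G.det) := by
    rw [det_add_smul_vecMulVec, sub_sub_cancel]
    ext1
    · simp only [Prod.fst_add, Prod.smul_fst, G]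
      module
    · simp [G]
  have h := hP (F, F.det) (G, G.det) θ (1 - θ) hθ.1 (by linarith [hθ.2]) (by ring)
  rw [← hpair, ← hWP _ hF, ← hWP _ hG, ← hWP _ hM] at h
  exact_mod_cast h

lemma det_diag2 (a b : ℝ) : (diag2 a b).det = a * b := by
  simp [diag2, det_fin_two_of]

lemma diag2_add_smul_vecMulVec (a b t : ℝ) :
    diag2 a b + t • vecMulVec ![1, 0] ![1, 0] = diag2 (a + t) b := by
  ext i j
  fin_cases i <;> fin_cases j <;> simp [diag2]

lemma distortionK_diag2 (a b : ℝ) :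
    distortionK (diag2 a b) = (a ^ 2 + b ^ 2) / (2 * (a * b)) := by
  simp [distortionK, frobSq, diag2, Fin.sum_univ_two]

lemma distortionK_add_sqrt_diag2 {a b : ℝ} (hb : 0 < b) (hba : b ≤ a) :
    distortionK (diag2 a b) + √(distortionK (diag2 a b) ^ 2 - 1) = a / b := by
  have ha : 0 < a := hb.trans_le hba
  have hsq : ((a ^ 2 + b ^ 2) / (2 * (a * b))) ^ 2 - 1
      = ((a ^ 2 - b ^ 2) / (2 * (a * b))) ^ 2 := by
    field_simp
    ring
  rw [distortionK_diag2, hsq, sqrt_sq (div_nonneg (by nlinarith) (by positivity))]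
  field_simp
  ring

def devLogPowEnergy (β : ℝ) (F : Mat2) : ℝ :=
  ((1/2) * (log (distortionK F + √((distortionK F) ^ 2 - 1))) ^ 2) ^ (β / 2)

lemma devLogPowEnergy_diag2 (β : ℝ) {c : ℝ} (hc : 1 ≤ c) :
    devLogPowEnergy β (diag2 c 1) = (1/2) ^ (β / 2) * log c ^ β := by
  have hlog : 0 ≤ log c := log_nonneg hc
  rw [devLogPowEnergy, distortionK_add_sqrt_diag2 one_pos hc, div_one,
    mul_rpow (by norm_num) (by positivity), ← rpow_natCast, ← rpow_mul hlog]
  congr 2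
  push_cast
  ring

lemma not_rankOneConvex_of_strictConcaveOn_diag2 {W : Mat2 → ℝ} {g : ℝ → ℝ} {a : ℝ}
    (ha : 0 < a) (hg : StrictConcaveOn ℝ (Ici a) g) (hW : ∀ c ∈ Ici a, W (diag2 c 1) = g c) :
    ¬ RankOneConvex W := by
  intro h
  have hdet : ∀ t ∈ Icc (0 : ℝ) 1, 0 < (diag2 a 1 + t • vecMulVec ![1, 0] ![1, 0]).det := by
    intro t ht
    rw [diag2_add_smul_vecMulVec, det_diag2]
    linarith [ht.1]
  have hconv := h (diag2 a 1) (by rw [det_diag2]; linarith) ![1, 0] ![1, 0] (1/2)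
    ⟨by norm_num, by norm_num⟩ hdet
  have hright : diag2 a 1 + vecMulVec ![1, 0] ![1, 0] = diag2 (a + 1) 1 := by
    simpa using diag2_add_smul_vecMulVec a 1 1
  rw [diag2_add_smul_vecMulVec, hright, hW a self_mem_Ici, hW (a + 1) (by simp),
    hW (a + (1 - 1/2)) (by norm_num)] at hconv
  have hstrict := hg.2 self_mem_Ici (show a + 1 ∈ Ici a by simp) (by linarith)
    (by norm_num : (0 : ℝ) < 1/2) (by norm_num : (0 : ℝ) < 1/2) (by norm_num)
  simp only [smul_eq_mul] at hstrict
  rw [show 1/2 * a + 1/2 * (a + 1) = a + (1 - 1/2) by ring] at hstrict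
  norm_num at hconv hstrict
  linarith

/-- for every `β > 0`, the energy `‖dev₂ log U‖^β`, written as
`((1/2)·(log(K(F)+√(K(F)²−1)))²)^{β/2}`, is neither rank-one convex nor
polyconvex on GL⁺(2). -/
theorem devLog_power_not_rankOneConvex_not_polyconvex (β : ℝ) (hβ : 0 < β) :
    ¬ RankOneConvex (fun F =>
        ((1/2) * (Real.log (distortionK F + Real.sqrt ((distortionK F) ^ 2 - 1))) ^ 2)
          ^ (β / 2)) ∧
    ¬ Polyconvex (fun F =>
        ((1/2) * (Real.log (distortionK F + Real.sqrt ((distortionK F) ^ 2 - 1))) ^ 2)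
          ^ (β / 2)) := by
  have hW : ¬ RankOneConvex (devLogPowEnergy β) :=
    not_rankOneConvex_of_strictConcaveOn_diag2 (exp_pos β)
      ((strictConcaveOn_log_rpow hβ).const_mul (by positivity))
      fun c hc => devLogPowEnergy_diag2 β ((one_le_exp hβ.le).trans hc)
  exact ⟨hW, fun hP => hW hP.rankOneConvex⟩
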